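/- For every t ∈ ℕ, Z_t ≤ M_t / S_t almost surely. -/

import Mathlib

open MeasureTheory Filter Set

/-- The running maximum `S t = max_{s ≤ t} M s`. -/
noncomputable def runMax {Ω : Type*} (M : ℕ → Ω → ℝ) (t : ℕ) (ω : Ω) : ℝ :=
  (Finset.range (t + 1)).sup' (Finset.nonempty_range_iff.mpr (Nat.succ_ne_zero t))
    (fun s => M s ω)

/-- The (ℕ ∪ {∞})-valued time of the final attained maximum of `M`. -/
noncomputable def tauF {Ω : Type*} (M : ℕ → Ω → ℝ) (ω : Ω) : ℕ∞ :=
  ⨆ s ∈ {s : ℕ | M s ω = runMax M s ω}, (s : ℕ∞)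

/-! On `{τ_F ≥ t}` the process comes back to its running maximum at some time `s ≥ t`, so it
reaches the `ℱ t`-measurable level `S t ≤ S s` after time `t`. For a nonnegative supermartingale
and a level `c` known at time `j`, stopping at the first time `≥ j` at which `M` reaches `c` gives
the conditional maximal inequality `c · P(M reaches c after j | ℱ j) ≤ M j`. Applied with
`c = S t ≥ M 0 = 1` it yields `S t · Z t ≤ M t`. -/

section RunMax

variable {Ω : Type*} {M : ℕ → Ω → ℝ}

lemma runMax_zero (M : ℕ → Ω → ℝ) (ω : Ω) : runMax M 0 ω = M 0 ω := by
  simp [runMax]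

lemma le_runMax {s t : ℕ} (h : s ≤ t) (ω : Ω) : M s ω ≤ runMax M t ω :=
  Finset.le_sup' (fun u => M u ω) (Finset.mem_range.mpr (Nat.lt_succ_of_le h))

lemma runMax_mono {t u : ℕ} (h : t ≤ u) (ω : Ω) : runMax M t ω ≤ runMax M u ω :=
  Finset.sup'_le _ _ fun _ hs => le_runMax ((Nat.lt_succ_iff.mp (Finset.mem_range.mp hs)).trans h) ω

lemma runMax_succ (M : ℕ → Ω → ℝ) (t : ℕ) : runMax M (t + 1) = runMax M t ⊔ M (t + 1) := by
  ext ω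
  simp [runMax, Finset.range_add_one, Finset.sup'_insert, sup_comm]

lemma measurable_runMax {m : MeasurableSpace Ω} {t : ℕ} (hM : ∀ s ≤ t, Measurable (M s)) :
    Measurable (runMax M t) :=
  Finset.measurable_range_sup'' hM

lemma stronglyMeasurable_runMax {m0 : MeasurableSpace Ω} {ℱ : Filtration ℕ m0}
    (hM : StronglyAdapted ℱ M) (t : ℕ) : StronglyMeasurable[ℱ t] (runMax M t) :=
  (measurable_runMax fun s hs => ((hM s).mono (ℱ.mono hs)).measurable).stronglyMeasurable

lemma integrable_runMax {m : MeasurableSpace Ω} {μ : Measure Ω} (hM : ∀ s, Integrable (M s) μ)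
    (t : ℕ) : Integrable (runMax M t) μ := by
  induction t with
  | zero => simpa [funext (runMax_zero M)] using hM 0
  | succ t ih => simpa [runMax_succ] using ih.sup (hM (t + 1))

lemma le_tauF_iff {t : ℕ} {ω : Ω} :
    (t : ℕ∞) ≤ tauF M ω ↔ ∃ s, t ≤ s ∧ M s ω = runMax M s ω := by
  constructor
  · intro h
    cases t with
    | zero => exact ⟨0, le_rfl, (runMax_zero M ω).symm⟩
    | succ t =>
      rw [Nat.cast_add, Nat.cast_one, ENat.add_one_le_iff (ENat.natCast_ne_top t), tauF,
        lt_biSup_iff] at h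
      obtain ⟨s, hs, hts⟩ := h
      exact ⟨s, Nat.cast_lt.mp hts, hs⟩
  · rintro ⟨s, hts, hs⟩
    exact (Nat.cast_le.mpr hts).trans (le_biSup (fun s : ℕ => (s : ℕ∞)) (show s ∈ {s | _} from hs))

lemma measurableSet_le_tauF {m : MeasurableSpace Ω} (hM : ∀ s, Measurable (M s)) (t : ℕ) :
    MeasurableSet {ω | (t : ℕ∞) ≤ tauF M ω} := by
  simp only [le_tauF_iff, ofPred_exists, ofPred_and]
  exact .iUnion fun s => (MeasurableSet.const _).inter
    (measurableSet_eq_fun (hM s) (measurable_runMax fun u _ => hM u))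

lemma setOf_le_tauF_subset (t : ℕ) :
    {ω | (t : ℕ∞) ≤ tauF M ω} ⊆ {ω | ∃ s, t ≤ s ∧ runMax M t ω ≤ M s ω} := fun ω hω => by
  obtain ⟨s, hts, hs⟩ := le_tauF_iff.mp hω
  exact ⟨s, hts, hs ▸ runMax_mono hts ω⟩

end RunMax

namespace MeasureTheory

variable {Ω : Type*} {m0 : MeasurableSpace Ω} {μ : Measure Ω} {ℱ : Filtration ℕ m0}
  {M : ℕ → Ω → ℝ} {c : Ω → ℝ} {j : ℕ}

lemma condExp_ae_le_of_forall_setIntegral_le {m : MeasurableSpace Ω} (hm : m ≤ m0)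
    [SigmaFinite (μ.trim hm)] {f g : Ω → ℝ} (hf : Integrable f μ) (hg : StronglyMeasurable[m] g)
    (hgi : Integrable g μ)
    (hfg : ∀ s, MeasurableSet[m] s → ∫ ω in s, f ω ∂μ ≤ ∫ ω in s, g ω ∂μ) :
    μ[f | m] ≤ᵐ[μ] g := by
  refine ae_le_of_ae_le_trim (ae_le_of_forall_setIntegral_le
    (integrable_condExp.trim hm stronglyMeasurable_condExp) (hgi.trim hm hg) fun s hs _ => ?_)
  rw [← setIntegral_trim hm stronglyMeasurable_condExp hs, ← setIntegral_trim hm hg hs,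
    setIntegral_condExp hm hf hs]
  exact hfg s hs

lemma measurableSet_exists_le (p : ℕ → Prop) (hc : Measurable c) (hM : ∀ i, Measurable (M i)) :
    MeasurableSet {ω | ∃ i, p i ∧ c ω ≤ M i ω} := by
  simp only [ofPred_exists, ofPred_and]
  exact .iUnion fun i => (MeasurableSet.const _).inter (measurableSet_le hc (hM i))

namespace Supermartingale

lemma measurable (hM : Supermartingale M ℱ μ) (i : ℕ) : Measurable (M i) :=
  ((hM.stronglyAdapted i).mono (ℱ.le i)).measurable

theorem setIntegral_inter_hitBefore_le [SigmaFiniteFiltration μ ℱ]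
    (hM : Supermartingale M ℱ μ) (hM₀ : ∀ i ω, 0 ≤ M i ω) (hc : StronglyMeasurable[ℱ j] c)
    (hci : Integrable c μ) {B : Set Ω} (hB : MeasurableSet[ℱ j] B) (k : ℕ) :
    ∫ ω in B ∩ {ω | ∃ i ∈ Finset.Ico j (j + k), c ω ≤ M i ω}, c ω ∂μ ≤ ∫ ω in B, M j ω ∂μ := by
  induction k generalizing j B with
  | zero =>
    have hempty : {ω | ∃ i ∈ Finset.Ico j (j + 0), c ω ≤ M i ω} = ∅ := by simp
    rw [hempty, inter_empty, Measure.restrict_empty, integral_zero_measure]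
    exact setIntegral_nonneg (ℱ.le j _ hB) fun ω _ => hM₀ j ω
  | succ k ih =>
    set T := {ω | c ω ≤ M j ω}
    have hT : MeasurableSet[ℱ j] T :=
      measurableSet_le hc.measurable (hM.stronglyAdapted j).measurable
    have hsplit : B ∩ {ω | ∃ i ∈ Finset.Ico j (j + (k + 1)), c ω ≤ M i ω}
        = B ∩ T ∪ (B \ T) ∩ {ω | ∃ i ∈ Finset.Ico (j + 1) (j + 1 + k), c ω ≤ M i ω} := by
      ext ω
      simp only [mem_union, mem_inter_iff, Set.mem_sdiff, mem_ofPred_eq, Finset.mem_Ico, T]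
      constructor
      · rintro ⟨hωB, i, ⟨hji, hik⟩, hi⟩
        by_cases hωT : c ω ≤ M j ω
        · exact Or.inl ⟨hωB, hωT⟩
        · refine Or.inr ⟨⟨hωB, hωT⟩, i, ⟨?_, by omega⟩, hi⟩
          rcases hji.eq_or_lt with rfl | h
          · exact absurd hi hωT
          · omega
      · rintro (⟨hωB, hωT⟩ | ⟨⟨hωB, -⟩, i, ⟨hji, hik⟩, hi⟩)
        · exact ⟨hωB, j, ⟨le_rfl, by omega⟩, hωT⟩
        · exact ⟨hωB, i, ⟨by omega, by omega⟩, hi⟩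
    have hB' : MeasurableSet[ℱ (j + 1)] (B \ T) := ℱ.mono j.le_succ _ (hB.diff hT)
    -- one step of optional stopping: stop at `j` on `B ∩ T`, continue from `j + 1` on `B \ T`
    calc ∫ ω in B ∩ {ω | ∃ i ∈ Finset.Ico j (j + (k + 1)), c ω ≤ M i ω}, c ω ∂μ
        = ∫ ω in B ∩ T, c ω ∂μ
          + ∫ ω in (B \ T) ∩ {ω | ∃ i ∈ Finset.Ico (j + 1) (j + 1 + k), c ω ≤ M i ω}, c ω ∂μ := by
          rw [hsplit]
          refine setIntegral_union ?_ ((ℱ.le _ _ hB').inter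
            (measurableSet_exists_le _ ((hc.mono (ℱ.le j)).measurable) hM.measurable))
            hci.integrableOn hci.integrableOn
          exact disjoint_sdiff_inter.symm.mono_right inter_subset_left
      _ ≤ ∫ ω in B ∩ T, M j ω ∂μ + ∫ ω in B \ T, M (j + 1) ω ∂μ :=
          add_le_add (setIntegral_mono_on hci.integrableOn (hM.integrable j).integrableOn
              (ℱ.le j _ (hB.inter hT)) fun ω hω => hω.2)
            (ih (hc.mono (ℱ.mono j.le_succ)) hB')
      _ ≤ ∫ ω in B ∩ T, M j ω ∂μ + ∫ ω in B \ T, M j ω ∂μ :=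
          add_le_add_right (hM.setIntegral_le j.le_succ (hB.diff hT)) _
      _ = ∫ ω in B, M j ω ∂μ :=
          integral_inter_add_sdiff (ℱ.le j _ hT) (hM.integrable j).integrableOn

theorem setIntegral_inter_hit_le [SigmaFiniteFiltration μ ℱ]
    (hM : Supermartingale M ℱ μ) (hM₀ : ∀ i ω, 0 ≤ M i ω) (hc : StronglyMeasurable[ℱ j] c)
    (hci : Integrable c μ) {B : Set Ω} (hB : MeasurableSet[ℱ j] B) :
    ∫ ω in B ∩ {ω | ∃ i, j ≤ i ∧ c ω ≤ M i ω}, c ω ∂μ ≤ ∫ ω in B, M j ω ∂μ := by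
  set H : ℕ → Set Ω := fun k => B ∩ {ω | ∃ i ∈ Finset.Ico j (j + k), c ω ≤ M i ω}
  have hH_mono : Monotone H := fun k l hkl => inter_subset_inter_right _
    fun ω ⟨i, hi, h⟩ => ⟨i, Finset.Ico_subset_Ico_right (by omega) hi, h⟩
  have hH_union : ⋃ k, H k = B ∩ {ω | ∃ i, j ≤ i ∧ c ω ≤ M i ω} := by
    ext ω
    simp only [H, mem_iUnion, mem_inter_iff, mem_ofPred_eq, Finset.mem_Ico]
    constructor
    · rintro ⟨k, hωB, i, ⟨hji, -⟩, hi⟩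
      exact ⟨hωB, i, hji, hi⟩
    · rintro ⟨hωB, i, hji, hi⟩
      exact ⟨i + 1 - j, hωB, i, ⟨hji, by omega⟩, hi⟩
  have hH_meas : ∀ k, MeasurableSet (H k) := fun k => (ℱ.le j _ hB).inter
    (measurableSet_exists_le _ ((hc.mono (ℱ.le j)).measurable) hM.measurable)
  have hlim := tendsto_setIntegral_of_monotone hH_meas hH_mono
    (by rw [hH_union]; exact hci.integrableOn)
  rw [hH_union] at hlim
  exact le_of_tendsto hlim
    (Eventually.of_forall fun k => hM.setIntegral_inter_hitBefore_le hM₀ hc hci hB k)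

theorem mul_condExp_indicator_hit_le [IsFiniteMeasure μ]
    (hM : Supermartingale M ℱ μ) (hM₀ : ∀ i ω, 0 ≤ M i ω) (hc : StronglyMeasurable[ℱ j] c)
    (hci : Integrable c μ) :
    c * μ[{ω | ∃ i, j ≤ i ∧ c ω ≤ M i ω}.indicator (fun _ => (1 : ℝ)) | ℱ j] ≤ᵐ[μ] M j := by
  set H := {ω | ∃ i, j ≤ i ∧ c ω ≤ M i ω}
  have hH : MeasurableSet H :=
    measurableSet_exists_le _ ((hc.mono (ℱ.le j)).measurable) hM.measurable
  have hcH : c * H.indicator (fun _ => 1) = H.indicator c := by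
    ext ω
    by_cases hω : ω ∈ H <;> simp [hω]
  have hpull := condExp_mul_of_stronglyMeasurable_left (μ := μ) hc
    (by rw [hcH]; exact hci.indicator hH) ((integrable_const (1 : ℝ)).indicator hH)
  refine hpull.symm.trans_le (condExp_ae_le_of_forall_setIntegral_le (ℱ.le j)
    (by rw [hcH]; exact hci.indicator hH) (hM.stronglyAdapted j) (hM.integrable j) fun B hB => ?_)
  rw [hcH, setIntegral_indicator hH]
  exact hM.setIntegral_inter_hit_le hM₀ hc hci hB

end Supermartingale

end MeasureTheory

/-- The Azéma supermartingale `Z t = P(τ_F ≥ t | ℱ t)` is bounded by `M t / S t` a.s. -/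
theorem stmt2 {Ω : Type*} {m0 : MeasurableSpace Ω} {P : Measure Ω} [IsProbabilityMeasure P]
    (ℱ : Filtration ℕ m0) (M : ℕ → Ω → ℝ)
    (hsuper : Supermartingale M ℱ P) (hnonneg : ∀ t ω, 0 ≤ M t ω)
    (hone : ∀ ω, M 0 ω = 1) (t : ℕ) :
    ∀ᵐ ω ∂P,
      (P[Set.indicator {ω' | (t : ℕ∞) ≤ tauF M ω'} (fun _ => (1 : ℝ)) | ℱ t]) ω
        ≤ M t ω / runMax M t ω := by
  have hS := stronglyMeasurable_runMax hsuper.stronglyAdapted t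
  have hS_pos : ∀ ω, 0 < runMax M t ω := fun ω =>
    zero_lt_one.trans_le (hone ω ▸ le_runMax (Nat.zero_le t) ω)
  have hmax :=
    hsuper.mul_condExp_indicator_hit_le hnonneg hS (integrable_runMax hsuper.integrable t)
  have hmono := condExp_mono (m := ℱ t)
    ((integrable_const (1 : ℝ)).indicator (measurableSet_le_tauF hsuper.measurable t))
    ((integrable_const (1 : ℝ)).indicator
      (measurableSet_exists_le _ ((hS.mono (ℱ.le t)).measurable) hsuper.measurable))
    (ae_of_all P (indicator_le_indicator_of_subset (setOf_le_tauF_subset t) fun _ => zero_le_one))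
  filter_upwards [hmax, hmono] with ω hω_max hω_mono
  rw [le_div_iff₀' (hS_pos ω)]
  exact (mul_le_mul_of_nonneg_left hω_mono (hS_pos ω).le).trans hω_max
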